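/- arXiv:1301.5312 — 3 statements merged into one kernel-verified Lean document; each statement's English description precedes it below -/
import Mathlib

section
/- Let $(X, \mu)$ be a finite measure space, and let $(f_j)$ be a sequence of measurable real-valued functions on $X$ that are uniformly bounded above by a constant $M$. Suppose that for every bounded measurable function $\varphi$ on $X$ the sequence $\int_X f_j \varphi \, d\mu$ converges as $j \to \infty$. Then for any measurable set $U \subseteq X$ with $\mu(U) > 0$ and any measurable function $h$ on $U$ with $h \ge c > 0$ and $h$ bounded above, it is not the case that $\int_U e^{f_j} h \, d\mu \to 0$ as $j \to \infty$. -/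
open MeasureTheory Filter Topology
open scoped ENNReal

/-!
Truncating each `f j` at a level where its lower tail is small, all `f j` become bounded below on a
common set `T ⊆ U` of positive measure. There they are integrable, so testing against `𝟙_T` shows
that `∫_T f j` converges (to a genuine limit, not Lean's junk value `0` of a non-integrable
integral). But `∫_U e^{f j} h → 0` and Markov's inequality give `μ (T ∩ {-K ≤ f j}) → 0` for every
`K`, which together with `f j ≤ M` drives `∫_T f j` to `-∞`.
-/

section

variable {X ι : Type*} [MeasurableSpace X] {μ : Measure X}

lemma tendsto_measure_setOf_lt_neg_natCast [IsFiniteMeasure μ] {f : X → ℝ} (hf : Measurable f) :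
    Tendsto (fun n : ℕ => μ {x | f x < -n}) atTop (𝓝 0) := by
  have hempty : ⋂ n : ℕ, {x | f x < -n} = ∅ := by
    ext x
    obtain ⟨n, hn⟩ := exists_nat_gt (-f x)
    simpa using ⟨n, by linarith⟩
  have hanti : Antitone fun n : ℕ => {x | f x < -n} := fun m n hmn x (hx : f x < -n) =>
    show f x < -m from hx.trans_le (neg_le_neg (Nat.cast_le.2 hmn))
  have := tendsto_measure_iInter_atTop
    (fun n => (measurableSet_lt hf measurable_const).nullMeasurableSet) hanti
    ⟨0, measure_ne_top μ _⟩
  rwa [hempty, measure_empty] at this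

lemma exists_measurableSet_measure_compl_lt_forall_bddBelow [Countable ι] [IsFiniteMeasure μ]
    {f : ι → X → ℝ} (hf : ∀ i, Measurable (f i)) {ε : ℝ≥0∞} (hε : ε ≠ 0) :
    ∃ S, MeasurableSet S ∧ μ Sᶜ < ε ∧ ∀ i, BddBelow (f i '' S) := by
  -- Truncate `f i` where its lower tail has measure `< δ i`, with `∑ δ i < ε`.
  obtain ⟨δ, hδ, hδε⟩ := ENNReal.exists_pos_sum_of_countable' hε ι
  choose n hn using fun i =>
    ((tendsto_measure_setOf_lt_neg_natCast (μ := μ) (hf i)).eventually_lt_const (hδ i)).exists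
  refine ⟨⋂ i, {x | -(n i : ℝ) ≤ f i x},
    MeasurableSet.iInter fun i => measurableSet_le measurable_const (hf i), ?_, fun i => ⟨-n i, ?_⟩⟩
  · have hcompl : (⋂ i, {x | -(n i : ℝ) ≤ f i x})ᶜ = ⋃ i, {x | f i x < -(n i : ℝ)} := by
      simp only [Set.compl_iInter, Set.compl_ofPred, not_le]
    calc μ (⋂ i, {x | -(n i : ℝ) ≤ f i x})ᶜ
        ≤ ∑' i, μ {x | f i x < -(n i : ℝ)} := hcompl ▸ measure_iUnion_le _
      _ ≤ ∑' i, δ i := ENNReal.tsum_le_tsum fun i => (hn i).le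
      _ < ε := hδε
  · rintro _ ⟨x, hx, rfl⟩
    exact Set.mem_iInter.1 hx i

lemma exists_subset_measure_pos_forall_bddBelow [Countable ι] {f : ι → X → ℝ}
    (hf : ∀ i, Measurable (f i)) {U : Set X} (hU : MeasurableSet U) (hU_pos : 0 < μ U)
    (hU_fin : μ U ≠ ∞) :
    ∃ T ⊆ U, MeasurableSet T ∧ 0 < μ T ∧ ∀ i, BddBelow (f i '' T) := by
  have := isFiniteMeasure_restrict.2 hU_fin
  obtain ⟨S, hS, hSc, hSbdd⟩ :=
    exists_measurableSet_measure_compl_lt_forall_bddBelow (μ := μ.restrict U) hf hU_pos.ne'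
  refine ⟨S ∩ U, Set.inter_subset_right, hS.inter hU, pos_iff_ne_zero.2 fun h0 => ?_,
    fun i => (hSbdd i).mono (Set.image_mono Set.inter_subset_left)⟩
  have := measure_univ_le_add_compl (μ := μ.restrict U) S
  rw [Measure.restrict_apply hS, h0, zero_add, Measure.restrict_apply_univ] at this
  exact (this.trans_lt hSc).false

lemma tendsto_measureReal_setOf_le_of_tendsto_integral {l : Filter ι} {F : ι → X → ℝ}
    (hF_nonneg : ∀ i, 0 ≤ᵐ[μ] F i) (hF_int : ∀ i, Integrable (F i) μ)
    (hF_lim : Tendsto (fun i => ∫ x, F i x ∂μ) l (𝓝 0)) {δ : ℝ} (hδ : 0 < δ) :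
    Tendsto (fun i => μ.real {x | δ ≤ F i x}) l (𝓝 0) :=
  squeeze_zero (fun _ => measureReal_nonneg)
    (fun i => (le_div_iff₀' hδ).2 (mul_meas_ge_le_integral_of_nonneg (hF_nonneg i) (hF_int i) δ))
    (by simpa using hF_lim.div_const δ)

lemma tendsto_integral_atBot_of_tendsto_measureReal_setOf_le [IsFiniteMeasure μ] [NeZero μ]
    {l : Filter ι} {g : ι → X → ℝ} {M : ℝ} (hg_meas : ∀ i, Measurable (g i))
    (hg_int : ∀ i, Integrable (g i) μ) (hg_le : ∀ i x, g i x ≤ M)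
    (hg_small : ∀ K, Tendsto (fun i => μ.real {x | -K ≤ g i x}) l (𝓝 0)) :
    Tendsto (fun i => ∫ x, g i x ∂μ) l atBot := by
  rw [tendsto_atBot]
  intro b
  -- `g i ≤ (M + K) 𝟙_{-K ≤ g i} - K`, whose integral tends to `-K μ(X) = b - 1`.
  set K := (1 - b) / μ.real Set.univ
  have hK : K * μ.real Set.univ = 1 - b := div_mul_cancel₀ _ measureReal_univ_pos.ne'
  have hev : ∀ᶠ i in l, (M + K) * μ.real {x | -K ≤ g i x} < 1 := by
    have := (hg_small K).const_mul (M + K)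
    rw [mul_zero] at this
    exact this.eventually_lt_const one_pos
  filter_upwards [hev] with i hi
  set A := {x | -K ≤ g i x}
  have hA : MeasurableSet A := measurableSet_le measurable_const (hg_meas i)
  have hpt : ∀ x, g i x ≤ (M + K) * A.indicator 1 x - K := by
    intro x
    by_cases hx : x ∈ A
    · simp [hx, hg_le i x]
    · simp only [hx, not_false_eq_true, Set.indicator_of_notMem, mul_zero, zero_sub]
      exact (not_le.1 hx).le
  have hA_int : Integrable (fun x => (M + K) * A.indicator 1 x) μ :=
    ((integrable_const (1 : ℝ)).indicator hA).const_mul _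
  calc ∫ x, g i x ∂μ ≤ ∫ x, ((M + K) * A.indicator 1 x - K) ∂μ :=
        integral_mono (hg_int i) (hA_int.sub (integrable_const K)) hpt
    _ = (M + K) * μ.real A - K * μ.real Set.univ := by
        rw [integral_sub hA_int (integrable_const K), integral_const_mul,
          integral_indicator_one hA, integral_const, smul_eq_mul, mul_comm K]
    _ ≤ b := by linarith

end

/-- Let `(X, μ)` be a finite measure space and `(f_j)` a sequence of measurable functions
uniformly bounded above by `M`, such that `∫ f_j φ dμ` converges as `j → ∞` for every bounded
measurable `φ` (i.e. `f_j` converges as a current).  Then for any measurable `U` with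
`μ(U) > 0` and any measurable `h` on `U` with `h ≥ c > 0` and `h` bounded above, the
integrals `∫_U e^{f_j} h dμ` do not tend to `0`. -/
theorem not_tendsto_zero_of_converges_as_current
    {X : Type*} [MeasurableSpace X] (μ : Measure X) [IsFiniteMeasure μ]
    (f : ℕ → X → ℝ) (M : ℝ)
    (hmeas : ∀ j, Measurable (f j))
    (hbdd : ∀ j x, f j x ≤ M)
    (hconv : ∀ φ : X → ℝ, Measurable φ → (∃ B, ∀ x, |φ x| ≤ B) →
      ∃ l : ℝ, Tendsto (fun j => ∫ x, f j x * φ x ∂μ) atTop (nhds l))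
    (U : Set X) (hU : MeasurableSet U) (hUpos : 0 < μ U)
    (h : X → ℝ) (hmeas_h : Measurable h)
    (c : ℝ) (hc : 0 < c) (hlow : ∀ x ∈ U, c ≤ h x)
    (hhigh : ∃ B, ∀ x ∈ U, h x ≤ B) :
    ¬ Tendsto (fun j => ∫ x in U, Real.exp (f j x) * h x ∂μ) atTop (nhds 0) := by
  intro htend
  obtain ⟨B, hB⟩ := hhigh
  obtain ⟨T, hTU, hT, hT_pos, hT_bdd⟩ :=
    exists_subset_measure_pos_forall_bddBelow hmeas hU hUpos (measure_ne_top μ U)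
  have : NeZero (μ.restrict T) := ⟨mt Measure.restrict_eq_zero.1 hT_pos.ne'⟩
  have hf_int (j : ℕ) : Integrable (f j) (μ.restrict T) := by
    obtain ⟨m, hm⟩ := hT_bdd j
    exact .of_mem_Icc m M (hmeas j).aemeasurable <| ae_restrict_of_forall_mem hT fun x hx =>
      ⟨hm (Set.mem_image_of_mem _ hx), hbdd j x⟩
  obtain ⟨l, hl⟩ := hconv (T.indicator 1) (measurable_one.indicator hT)
    ⟨1, fun x => by by_cases hx : x ∈ T <;> simp [hx]⟩
  have hlT : Tendsto (fun j => ∫ x in T, f j x ∂μ) atTop (𝓝 l) := by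
    simpa only [← Set.indicator_mul_right, Pi.one_apply, mul_one, integral_indicator hT] using hl
  have hF_mem (j : ℕ) : ∀ x ∈ U, Real.exp (f j x) * h x ∈ Set.Icc 0 (Real.exp M * B) :=
    fun x hx => have hhx : 0 ≤ h x := hc.le.trans (hlow x hx)
      ⟨mul_nonneg (Real.exp_pos _).le hhx,
        mul_le_mul (Real.exp_le_exp.2 (hbdd j x)) (hB x hx) hhx (Real.exp_pos M).le⟩
  have hF_int (j : ℕ) : IntegrableOn (fun x => Real.exp (f j x) * h x) U μ :=
    .of_mem_Icc _ _ ((hmeas j).exp.mul hmeas_h).aemeasurable <|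
      ae_restrict_of_forall_mem hU (hF_mem j)
  refine not_tendsto_nhds_of_tendsto_atBot
    (tendsto_integral_atBot_of_tendsto_measureReal_setOf_le hmeas hf_int hbdd fun K => ?_) l hlT
  -- Markov: `-K ≤ f j` forces `exp (-K) * c ≤ exp (f j) * h` on `T ⊆ U`.
  refine squeeze_zero (fun _ => measureReal_nonneg) (fun j => ?_)
    (tendsto_measureReal_setOf_le_of_tendsto_integral
      (fun j => ae_restrict_of_forall_mem hU fun x hx => (hF_mem j x hx).1) hF_int htend
      (mul_pos (Real.exp_pos (-K)) hc))
  rw [measureReal_restrict_apply' hT, measureReal_restrict_apply' hU]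
  exact measureReal_mono fun x ⟨hx, hxT⟩ =>
    ⟨mul_le_mul (Real.exp_le_exp.2 hx) (hlow x (hTU hxT)) hc.le (Real.exp_pos _).le, hTU hxT⟩
end

section
/- Fix $\delta > 0$ and define $\tilde g_\delta'(x) = 1$ for $x \in (0, \delta]$, $\tilde g_\delta'(x) = \cos^2\big(\tfrac{\pi}{2\delta}(x - \delta)\big)$ for $x \in (\delta, 2\delta)$, and $\tilde g_\delta'(x) = 0$ for $x \ge 2\delta$, and set $\tilde g_\delta(x) = \int_0^x \tilde g_\delta'(t)\, dt$. Then $\tilde g_\delta$ is twice continuously differentiable on $(0,\infty)$, satisfies $\tilde g_\delta(x) = x$ for $x \in (0, \delta)$, and satisfies the differential inequality $\big(\tfrac{\tilde g_\delta'(x)}{\tilde g_\delta(x)}\big)^2 - \tfrac{\tilde g_\delta''(x)}{\tilde g_\delta(x)} - \tfrac{\tilde g_\delta'(x)}{x \tilde g_\delta(x)} \ge 0$ for all $x > 0$, with equality for $x \in (0,\delta) \cup (2\delta, \infty)$. -/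
open Set

/-- The piecewise derivative `g̃_δ'` : equal to `1` on `(0, δ]`, to
`cos²(π/(2δ)(x-δ))` on `(δ, 2δ)`, and to `0` for `x ≥ 2δ`. -/
noncomputable def gAux (δ x : ℝ) : ℝ :=
  if x ≤ δ then 1
  else if x < 2 * δ then Real.cos (Real.pi / (2 * δ) * (x - δ)) ^ 2
  else 0

/-- The function `g̃_δ(x) = ∫₀ˣ g̃_δ'(t) dt`. -/
noncomputable def gDelta (δ x : ℝ) : ℝ := ∫ t in (0:ℝ)..x, gAux δ t

/-!
Put `θ = π (x - δ) / (2δ)`, clamped to `[0, π/2]`. Then `g̃' = cos² θ` and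
`g̃'' = -(π/δ) sin θ cos θ`, which is continuous because `sin 2θ` vanishes at both ends of the
clamp; so `g̃` is `C²`. Since `0 ≤ g̃'` and `g̃ ≤ x`, the expression is at least
`(g̃'(g̃' - 1) - g̃ g̃'') / g̃²`, and on `[δ, 2δ]` the numerator equals
`sin θ cos θ (π g̃/δ - sin θ cos θ) ≥ 0` because `sin θ cos θ ≤ 1 < π ≤ π g̃/δ`.
-/

open Real

section Clamp

variable {E : Type*} [NormedAddCommGroup E] [NormedSpace ℝ E] {f f' : ℝ → E}

theorem hasDerivAt_comp_max_left (hf : ∀ y, HasDerivAt f (f' y) y) (hf' : Continuous f')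
    {a : ℝ} (ha : f' a = 0) (x : ℝ) :
    HasDerivAt (fun y => f (max a y)) (f' (max a x)) x := by
  have hfc : Continuous f := continuous_iff_continuousAt.2 fun y => (hf y).continuousAt
  refine hasDerivAt_of_hasDerivAt_of_ne' (f := fun y => f (max a y)) (g := fun y => f' (max a y))
    (x := a) (fun y hy => ?_) (by fun_prop) (by fun_prop) x
  rcases hy.lt_or_gt with hy | hy
  · rw [max_eq_left hy.le, ha]
    refine (hasDerivAt_const y (f a)).congr_of_eventuallyEq ?_
    filter_upwards [Iio_mem_nhds hy] with z hz
    rw [max_eq_left hz.le]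
  · rw [max_eq_right hy.le]
    refine (hf y).congr_of_eventuallyEq ?_
    filter_upwards [Ioi_mem_nhds hy] with z hz
    rw [max_eq_right hz.le]

theorem hasDerivAt_comp_min_right (hf : ∀ y, HasDerivAt f (f' y) y) (hf' : Continuous f')
    {b : ℝ} (hb : f' b = 0) (x : ℝ) :
    HasDerivAt (fun y => f (min y b)) (f' (min x b)) x := by
  have hfc : Continuous f := continuous_iff_continuousAt.2 fun y => (hf y).continuousAt
  refine hasDerivAt_of_hasDerivAt_of_ne' (f := fun y => f (min y b)) (g := fun y => f' (min y b))
    (x := b) (fun y hy => ?_) (by fun_prop) (by fun_prop) x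
  rcases hy.lt_or_gt with hy | hy
  · rw [min_eq_left hy.le]
    refine (hf y).congr_of_eventuallyEq ?_
    filter_upwards [Iio_mem_nhds hy] with z hz
    rw [min_eq_left hz.le]
  · rw [min_eq_right hy.le, hb]
    refine (hasDerivAt_const y (f b)).congr_of_eventuallyEq ?_
    filter_upwards [Ioi_mem_nhds hy] with z hz
    rw [min_eq_right hz.le]

theorem hasDerivAt_comp_clamp (hf : ∀ y, HasDerivAt f (f' y) y) (hf' : Continuous f')
    {a b : ℝ} (hab : a ≤ b) (ha : f' a = 0) (hb : f' b = 0) (x : ℝ) :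
    HasDerivAt (fun y => f (max a (min y b))) (f' (max a (min x b))) x :=
  hasDerivAt_comp_min_right (hasDerivAt_comp_max_left hf hf' ha) (by fun_prop)
    (by rwa [max_eq_right hab]) x

end Clamp

theorem sq_div_sub_div_sub_div_nonneg {x g d₁ d₂ : ℝ} (hg : 0 < g) (hgx : g ≤ x)
    (hd₁ : 0 ≤ d₁) (h : g * d₂ ≤ d₁ * (d₁ - 1)) :
    0 ≤ (d₁ / g) ^ 2 - d₂ / g - d₁ / (x * g) := by
  have hx : 0 < x := hg.trans_le hgx
  have key : (d₁ / g) ^ 2 - d₂ / g - d₁ / (x * g) =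
      (d₁ * (1 - g / x) + (d₁ * (d₁ - 1) - g * d₂)) / g ^ 2 := by
    field_simp
    ring
  rw [key]
  have : g / x ≤ 1 := (div_le_one hx).2 hgx
  have : 0 ≤ d₁ * (1 - g / x) := mul_nonneg hd₁ (by linarith)
  exact div_nonneg (by linarith) (sq_nonneg g)

section GDelta

variable {δ : ℝ}

noncomputable def gMid (δ u : ℝ) : ℝ := cos (π / (2 * δ) * (u - δ)) ^ 2

noncomputable def gMidDeriv (δ u : ℝ) : ℝ := -(π / (2 * δ)) * sin (π / δ * (u - δ))

theorem hasDerivAt_gMid (hδ : 0 < δ) (u : ℝ) : HasDerivAt (gMid δ) (gMidDeriv δ u) u := by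
  have hθ : HasDerivAt (fun v => π / (2 * δ) * (v - δ)) (π / (2 * δ)) u := by
    simpa using ((hasDerivAt_id u).sub_const δ).const_mul (π / (2 * δ))
  refine (hθ.cos.pow 2).congr_deriv ?_
  have h2 : π / δ * (u - δ) = 2 * (π / (2 * δ) * (u - δ)) := by
    field_simp
  rw [gMidDeriv, h2, sin_two_mul]
  push_cast
  ring

theorem continuous_gMidDeriv : Continuous (gMidDeriv δ) := by
  unfold gMidDeriv; fun_prop

theorem gMidDeriv_self : gMidDeriv δ δ = 0 := by simp [gMidDeriv]

theorem gMidDeriv_two_mul (hδ : 0 < δ) : gMidDeriv δ (2 * δ) = 0 := by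
  have : π / δ * (2 * δ - δ) = π := by field_simp; ring
  simp [gMidDeriv, this]

theorem gAux_eq_gMid_clamp (hδ : 0 < δ) (x : ℝ) :
    gAux δ x = gMid δ (max δ (min x (2 * δ))) := by
  by_cases h₁ : x ≤ δ
  · simp [gAux, gMid, h₁]
  by_cases h₂ : x < 2 * δ
  · simp [gAux, gMid, h₁, h₂, min_eq_left h₂.le, max_eq_right (not_le.1 h₁).le]
  · have : π / (2 * δ) * (2 * δ - δ) = π / 2 := by field_simp; ring
    have hδ₂ : δ ≤ 2 * δ := by linarith
    simp [gAux, gMid, h₁, h₂, min_eq_right (not_lt.1 h₂), max_eq_right hδ₂, this]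

theorem hasDerivAt_gAux (hδ : 0 < δ) (x : ℝ) :
    HasDerivAt (gAux δ) (gMidDeriv δ (max δ (min x (2 * δ)))) x := by
  rw [funext (gAux_eq_gMid_clamp hδ)]
  exact hasDerivAt_comp_clamp (hasDerivAt_gMid hδ) continuous_gMidDeriv (by linarith)
    gMidDeriv_self (gMidDeriv_two_mul hδ) x

theorem deriv_gAux (hδ : 0 < δ) :
    deriv (gAux δ) = fun x => gMidDeriv δ (max δ (min x (2 * δ))) :=
  funext fun x => (hasDerivAt_gAux hδ x).deriv

theorem continuous_gAux (hδ : 0 < δ) : Continuous (gAux δ) :=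
  continuous_iff_continuousAt.2 fun x => (hasDerivAt_gAux hδ x).continuousAt

theorem hasDerivAt_gDelta (hδ : 0 < δ) (x : ℝ) : HasDerivAt (gDelta δ) (gAux δ x) x :=
  ((continuous_gAux hδ).integral_hasStrictDerivAt 0 x).hasDerivAt

theorem deriv_gDelta (hδ : 0 < δ) : deriv (gDelta δ) = gAux δ :=
  funext fun x => (hasDerivAt_gDelta hδ x).deriv

theorem deriv_deriv_gDelta (hδ : 0 < δ) :
    deriv (deriv (gDelta δ)) = fun x => gMidDeriv δ (max δ (min x (2 * δ))) := by
  rw [deriv_gDelta hδ, deriv_gAux hδ]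

theorem contDiff_gDelta (hδ : 0 < δ) : ContDiff ℝ 2 (gDelta δ) := by
  rw [show (2 : WithTop ℕ∞) = 1 + 1 from rfl, contDiff_succ_iff_deriv, deriv_gDelta hδ,
    contDiff_one_iff_deriv, deriv_gAux hδ]
  exact ⟨fun x => (hasDerivAt_gDelta hδ x).differentiableAt, by simp,
    fun x => (hasDerivAt_gAux hδ x).differentiableAt,
    continuous_gMidDeriv.comp (by fun_prop)⟩

theorem gAux_of_le {x : ℝ} (hx : x ≤ δ) : gAux δ x = 1 := if_pos hx

theorem gAux_of_two_mul_le (hδ : 0 < δ) {x : ℝ} (hx : 2 * δ ≤ x) : gAux δ x = 0 := by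
  rw [gAux, if_neg (by linarith), if_neg hx.not_gt]

theorem gAux_mem_Icc (hδ : 0 < δ) (x : ℝ) : gAux δ x ∈ Icc 0 1 := by
  rw [gAux_eq_gMid_clamp hδ]
  exact ⟨sq_nonneg _, cos_sq_le_one _⟩

theorem gDelta_eq_self (hδ : 0 < δ) {x : ℝ} (hx : x ≤ δ) : gDelta δ x = x := by
  have h : EqOn (gAux δ) 1 (uIcc 0 x) := fun t ht => gAux_of_le <| by
    rcases le_total 0 x with h | h
    · exact (uIcc_of_le h ▸ ht).2.trans hx
    · exact (uIcc_of_ge h ▸ ht).2.trans hδ.le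
  rw [gDelta, intervalIntegral.integral_congr h]
  simp

theorem gDelta_le_self (hδ : 0 < δ) {x : ℝ} (hx : 0 ≤ x) : gDelta δ x ≤ x := by
  have := intervalIntegral.integral_mono_on hx
    ((continuous_gAux hδ).intervalIntegrable 0 x)
    (intervalIntegrable_const (μ := MeasureTheory.volume)) fun t _ => (gAux_mem_Icc hδ t).2
  simpa [gDelta] using this

theorem monotone_gDelta (hδ : 0 < δ) : Monotone (gDelta δ) :=
  monotone_of_deriv_nonneg (fun x => (hasDerivAt_gDelta hδ x).differentiableAt)
    fun x => deriv_gDelta hδ ▸ (gAux_mem_Icc hδ x).1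

theorem le_gDelta (hδ : 0 < δ) {x : ℝ} (hx : δ ≤ x) : δ ≤ gDelta δ x :=
  (gDelta_eq_self hδ le_rfl).symm.le.trans (monotone_gDelta hδ hx)

theorem gDelta_mul_gMidDeriv_le (hδ : 0 < δ) {x : ℝ} (h₁ : δ ≤ x) (h₂ : x ≤ 2 * δ) :
    gDelta δ x * gMidDeriv δ x ≤ gMid δ x * (gMid δ x - 1) := by
  set θ := π / (2 * δ) * (x - δ) with hθ
  have hθ₀ : 0 ≤ θ := mul_nonneg (by positivity) (by linarith)
  have hθ₁ : θ ≤ π / 2 := by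
    rw [hθ, div_mul_eq_mul_div, div_le_div_iff₀ (by positivity) two_pos]
    nlinarith [pi_pos]
  have hs : 0 ≤ sin θ := sin_nonneg_of_nonneg_of_le_pi hθ₀ (by linarith [pi_pos])
  have hc : 0 ≤ cos θ := cos_nonneg_of_mem_Icc ⟨by linarith [pi_pos], hθ₁⟩
  have hsc : sin θ * cos θ ≤ 1 := by
    nlinarith [sin_sq_add_cos_sq θ, sq_nonneg (sin θ - cos θ)]
  have hg : π ≤ π / δ * gDelta δ x := by
    rw [div_mul_eq_mul_div, le_div_iff₀ hδ]
    nlinarith [pi_pos, le_gDelta hδ h₁]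
  have hderiv : gMidDeriv δ x = -(π / δ) * (sin θ * cos θ) := by
    rw [gMidDeriv, show π / δ * (x - δ) = 2 * θ by rw [hθ]; field_simp, sin_two_mul]
    field_simp
  rw [hderiv, gMid, ← hθ]
  nlinarith [sin_sq_add_cos_sq θ, mul_nonneg hs hc, pi_gt_three]

end GDelta

/-- `g̃_δ` is `C²` on `(0, ∞)`, equals `x` on `(0, δ)`, satisfies the differential
inequality `(g̃_δ'/g̃_δ)² - g̃_δ''/g̃_δ - g̃_δ'/(x g̃_δ) ≥ 0` on `(0, ∞)`, with equality on
`(0, δ) ∪ (2δ, ∞)`. -/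
theorem gDelta_properties (δ : ℝ) (hδ : 0 < δ) :
    ContDiffOn ℝ 2 (gDelta δ) (Ioi (0:ℝ)) ∧
    (∀ x ∈ Ioo (0:ℝ) δ, gDelta δ x = x) ∧
    (∀ x : ℝ, 0 < x →
      0 ≤ (deriv (gDelta δ) x / gDelta δ x) ^ 2
            - deriv (deriv (gDelta δ)) x / gDelta δ x
            - deriv (gDelta δ) x / (x * gDelta δ x)) ∧
    (∀ x : ℝ, x ∈ Ioo (0:ℝ) δ ∪ Ioi (2 * δ) →
      (deriv (gDelta δ) x / gDelta δ x) ^ 2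
          - deriv (deriv (gDelta δ)) x / gDelta δ x
          - deriv (gDelta δ) x / (x * gDelta δ x) = 0) := by
  rw [deriv_deriv_gDelta hδ, deriv_gDelta hδ]
  beta_reduce
  have hzero : ∀ x : ℝ, x ∈ Ioo (0:ℝ) δ ∪ Ioi (2 * δ) →
      (gAux δ x / gDelta δ x) ^ 2 - gMidDeriv δ (max δ (min x (2 * δ))) / gDelta δ x
        - gAux δ x / (x * gDelta δ x) = 0 := by
    rintro x (⟨hx₀, hx⟩ | hx)
    · rw [max_eq_left ((min_le_left _ _).trans hx.le), gMidDeriv_self, gAux_of_le hx.le,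
        gDelta_eq_self hδ hx.le]
      field_simp
      ring
    · rw [min_eq_right (le_of_lt hx), max_eq_right (by linarith), gMidDeriv_two_mul hδ,
        gAux_of_two_mul_le hδ (le_of_lt hx)]
      simp
  refine ⟨(contDiff_gDelta hδ).contDiffOn, fun x hx => gDelta_eq_self hδ hx.2.le,
    fun x hx₀ => ?_, hzero⟩
  rcases lt_or_ge x δ with hx | h₁
  · exact (hzero x (.inl ⟨hx₀, hx⟩)).ge
  rcases lt_or_ge (2 * δ) x with hx | h₂
  · exact (hzero x (.inr hx)).ge
  rw [gAux_eq_gMid_clamp hδ, min_eq_left h₂, max_eq_right h₁]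
  exact sq_div_sub_div_sub_div_nonneg (hδ.trans_le (le_gDelta hδ h₁))
    (gDelta_le_self hδ hx₀.le) (sq_nonneg _) (gDelta_mul_gMidDeriv_le hδ h₁ h₂)
end

section
/- Let $(X, g)$ be a compact Riemannian manifold and let $(f_j)$ be a sequence of smooth functions on $X$ such that: (i) $\sup_X f_j \le M$ for all $j$ with $M$ independent of $j$; (ii) for every smooth test function $\varphi$, $\int_X f_j \varphi \, d\mathrm{vol}_g$ converges as $j \to \infty$. Then for any nonempty open set $U \subseteq X$, it is not the case that $\int_U e^{f_j} \, d\mathrm{vol}_g \to 0$ as $j \to \infty$. -/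
/-!
Take `U₀` with `closure U₀ ⊆ U` and a bump `ψ` equal to `1` on `U₀` and supported in `U`.
For every real `c`, the inequality `t ≤ c + e^{-c} e^t` gives
`∫ f_j ψ ≤ c · vol U₀ + e^{-c} ∫_U e^{f_j} + max M 0 · vol X`.
If `∫_U e^{f_j} → 0`, passing to the limit bounds `lim ∫ f_j ψ` by `c · vol U₀ + max M 0 · vol X`
for every `c`, which is absurd since `vol U₀ > 0`.
-/

open MeasureTheory Filter Real Set

theorem le_add_exp_neg_mul_exp (c t : ℝ) : t ≤ c + exp (-c) * exp t := by
  have := add_one_le_exp (t - c)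
  rw [← exp_add, neg_add_eq_sub]
  linarith

theorem mul_le_max_zero_of_le_of_mem_Icc {t M p : ℝ} (ht : t ≤ M) (hp : p ∈ Icc (0 : ℝ) 1) :
    t * p ≤ max M 0 := by
  rcases le_total 0 t with h | h
  · nlinarith [hp.1, hp.2, le_max_left M 0]
  · nlinarith [hp.1, le_max_right M 0]

section

variable {X : Type*} [MeasurableSpace X] {μ : Measure X} [IsFiniteMeasure μ]

theorem integral_le_mul_measureReal_univ_add_exp_neg_mul {f : X → ℝ} (hf : Integrable f μ)
    (hef : Integrable (fun x => exp (f x)) μ) (c : ℝ) :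
    ∫ x, f x ∂μ ≤ c * μ.real univ + exp (-c) * ∫ x, exp (f x) ∂μ := by
  calc ∫ x, f x ∂μ ≤ ∫ x, (c + exp (-c) * exp (f x)) ∂μ :=
        integral_mono hf ((integrable_const c).add (hef.const_mul _))
          fun x => le_add_exp_neg_mul_exp c (f x)
    _ = c * μ.real univ + exp (-c) * ∫ x, exp (f x) ∂μ := by
        rw [integral_add (integrable_const c) (hef.const_mul _), integral_const, integral_const_mul,
          smul_eq_mul, mul_comm]

theorem integral_mul_le_setIntegral_add {f ψ : X → ℝ} {s : Set X} {M : ℝ} (hs : MeasurableSet s)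
    (hf : Integrable f μ) (hfψ : Integrable (fun x => f x * ψ x) μ) (hM : ∀ x, f x ≤ M)
    (hψ : ∀ x, ψ x ∈ Icc (0 : ℝ) 1) (hψs : ∀ x ∈ s, ψ x = 1) :
    ∫ x, f x * ψ x ∂μ ≤ ∫ x in s, f x ∂μ + max M 0 * μ.real univ := by
  have hpt : ∀ x, f x * ψ x ≤ s.indicator f x + max M 0 := by
    intro x
    by_cases hx : x ∈ s
    · rw [indicator_of_mem hx, hψs x hx, mul_one]
      exact le_add_of_nonneg_right (le_max_right M 0)
    · rw [indicator_of_notMem hx, zero_add]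
      exact mul_le_max_zero_of_le_of_mem_Icc (hM x) (hψ x)
  calc ∫ x, f x * ψ x ∂μ ≤ ∫ x, (s.indicator f x + max M 0) ∂μ :=
        integral_mono hfψ ((hf.indicator hs).add (integrable_const _)) hpt
    _ = ∫ x in s, f x ∂μ + max M 0 * μ.real univ := by
        rw [integral_add (hf.indicator hs) (integrable_const _), integral_indicator hs,
          integral_const, smul_eq_mul, mul_comm]

end

theorem integral_mul_bump_le {X : Type*} [TopologicalSpace X] [CompactSpace X] [MeasurableSpace X]
    [BorelSpace X] {μ : Measure X} [IsFiniteMeasure μ] {f ψ : X → ℝ} {s t : Set X} {M : ℝ}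
    (hf : Continuous f) (hψ : Continuous ψ) (hM : ∀ x, f x ≤ M) (hψ01 : ∀ x, ψ x ∈ Icc (0 : ℝ) 1)
    (hψs : ∀ x ∈ s, ψ x = 1) (hs : MeasurableSet s) (hst : s ⊆ t) (c : ℝ) :
    ∫ x, f x * ψ x ∂μ ≤
      c * μ.real s + exp (-c) * ∫ x in t, exp (f x) ∂μ + max M 0 * μ.real univ := by
  have hint : ∀ g : X → ℝ, Continuous g → Integrable g μ := fun g hg =>
    hg.integrable_of_hasCompactSupport (HasCompactSupport.of_compactSpace g)
  have hexp : Integrable (fun x => exp (f x)) μ := hint _ (continuous_exp.comp hf)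
  calc ∫ x, f x * ψ x ∂μ ≤ ∫ x in s, f x ∂μ + max M 0 * μ.real univ :=
        integral_mul_le_setIntegral_add hs (hint f hf) (hint _ (hf.mul hψ)) hM hψ01 hψs
    _ ≤ c * μ.real s + exp (-c) * ∫ x in s, exp (f x) ∂μ + max M 0 * μ.real univ := by
        gcongr
        simpa only [measureReal_restrict_apply_univ] using
          integral_le_mul_measureReal_univ_add_exp_neg_mul (hint f hf).integrableOn
            hexp.integrableOn c
    _ ≤ c * μ.real s + exp (-c) * ∫ x in t, exp (f x) ∂μ + max M 0 * μ.real univ := by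
        gcongr
        · exact ae_of_all _ fun x => (exp_pos _).le
        · exact hexp.integrableOn

/-- **Lemma 3.5 of the paper (case `h ≡ 1`, manifold version).**  Let `(X, g)` be a compact
Riemannian manifold — abstracted here by a compact space `X` with its (finite, positive on
open sets) Riemannian volume measure `vol` and its class `Smooth` of smooth functions, which
are continuous and include bump functions.  Let `(f_j)` be a sequence of smooth functions
with `sup_X f_j ≤ M` uniformly, such that `∫ f_j φ d vol` converges for every smooth test
function `φ`.  Then for any nonempty open `U ⊆ X`, the integrals `∫_U e^{f_j} d vol` do not
tend to `0`. -/
theorem exp_integral_not_tendsto_zero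
    {X : Type*} [TopologicalSpace X] [CompactSpace X] [MeasurableSpace X] [BorelSpace X]
    (vol : Measure X) [IsFiniteMeasure vol] [vol.IsOpenPosMeasure]
    (Smooth : (X → ℝ) → Prop)
    (hSmoothCont : ∀ g, Smooth g → Continuous g)
    (hShrink : ∀ U : Set X, IsOpen U → U.Nonempty →
      ∃ U₀ : Set X, IsOpen U₀ ∧ U₀.Nonempty ∧ closure U₀ ⊆ U)
    (hBump : ∀ U₀ U : Set X, IsOpen U₀ → IsOpen U → closure U₀ ⊆ U →
      ∃ ψ : X → ℝ, Smooth ψ ∧ (∀ x, ψ x ∈ Set.Icc (0:ℝ) 1) ∧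
        (∀ x ∈ U₀, ψ x = 1) ∧ ∀ x ∉ U, ψ x = 0)
    (f : ℕ → X → ℝ) (hf : ∀ j, Smooth (f j))
    (M : ℝ) (hM : ∀ j x, f j x ≤ M)
    (hconv : ∀ φ, Smooth φ →
      ∃ l : ℝ, Tendsto (fun j => ∫ x, f j x * φ x ∂vol) atTop (nhds l))
    (U : Set X) (hUopen : IsOpen U) (hUne : U.Nonempty) :
    ¬ Tendsto (fun j => ∫ x in U, Real.exp (f j x) ∂vol) atTop (nhds 0) := by
  intro htend
  obtain ⟨U₀, hU₀open, hU₀ne, hU₀U⟩ := hShrink U hUopen hUne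
  obtain ⟨ψ, hψ, hψ01, hψ1, -⟩ := hBump U₀ U hU₀open hUopen hU₀U
  obtain ⟨l, hl⟩ := hconv ψ hψ
  set K := max M 0 * vol.real univ
  have hl_le : ∀ c, l ≤ c * vol.real U₀ + K := fun c => by
    refine le_of_tendsto_of_tendsto' hl ?_ fun j =>
      integral_mul_bump_le (hSmoothCont _ (hf j)) (hSmoothCont ψ hψ) (hM j) hψ01 hψ1
        hU₀open.measurableSet (subset_closure.trans hU₀U) c
    simpa using ((htend.const_mul (exp (-c))).const_add (c * vol.real U₀)).add_const K
  have hU₀pos : 0 < vol.real U₀ :=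
    ENNReal.toReal_pos (hU₀open.measure_ne_zero vol hU₀ne) (measure_ne_top vol U₀)
  have hcontra := hl_le ((l - K - 1) / vol.real U₀)
  rw [div_mul_cancel₀ _ hU₀pos.ne'] at hcontra
  linarith
end
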